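/- Let H be a graph with at least one edge and no isolated edges such that k1' > k0 and k1 > k0. Then for every integer n ≥ |H|, sat(n, H) ≥ (k0 + (k1' − k0)/k1')·n/2 − c2, where c2 = (k0 + 2)(k1' − k0)/(2·k1') + (k0 + 1)²/8. -/

import Mathlib

open SimpleGraph

/-- `G` contains a subgraph isomorphic to `H`. -/
def ContainsCopy {α β : Type*} (G : SimpleGraph α) (H : SimpleGraph β) : Prop :=
  ∃ f : β → α, Function.Injective f ∧ ∀ ⦃u v : β⦄, H.Adj u v → G.Adj (f u) (f v)

/-- `G` is `H`-saturated: `G` is `H`-free but adding any edge creates a copy of `H`. -/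
def IsSat {α β : Type*} (G : SimpleGraph α) (H : SimpleGraph β) : Prop :=
  ¬ ContainsCopy G H ∧
    ∀ x y : α, x ≠ y → ¬ G.Adj x y →
      ContainsCopy (G ⊔ SimpleGraph.fromEdgeSet {s(x, y)}) H

/-- The degree of a vertex. -/
noncomputable def deg {α : Type*} (G : SimpleGraph α) (v : α) : ℕ :=
  (G.neighborSet v).ncard

/-- `wt0 uv = max (d u) (d v) - 1`. -/
noncomputable def wt0 {β : Type*} (H : SimpleGraph β) (u v : β) : ℕ :=
  max (deg H u) (deg H v) - 1

/-- The neighborhood of the edge `uv`: `(N(u) - v) ∪ (N(v) - u)`. -/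
def edgeNbhd {β : Type*} (H : SimpleGraph β) (u v : β) : Set β :=
  (H.neighborSet u \ {v}) ∪ (H.neighborSet v \ {u})

/-- `wt1 uv`: the maximum degree of a vertex in the neighborhood of the edge `uv`. -/
noncomputable def wt1 {β : Type*} (H : SimpleGraph β) (u v : β) : ℕ :=
  sSup (deg H '' edgeNbhd H u v)

/-- `k0`: the minimum of `wt0` over the edges of `H`. -/
noncomputable def paramK0 {β : Type*} (H : SimpleGraph β) : ℕ :=
  sInf {k | ∃ u v, H.Adj u v ∧ wt0 H u v = k}

/-- `k1`: the minimum of `wt1` over the edges of `H`. -/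
noncomputable def paramK1 {β : Type*} (H : SimpleGraph β) : ℕ :=
  sInf {k | ∃ u v, H.Adj u v ∧ wt1 H u v = k}

/-- `k1'`: the minimum of `wt1` over the edges of `H` minimizing `wt0`. -/
noncomputable def paramK1p {β : Type*} (H : SimpleGraph β) : ℕ :=
  sInf {k | ∃ u v, H.Adj u v ∧ wt0 H u v = paramK0 H ∧ wt1 H u v = k}

/-- `k0'`: the minimum of `wt0` over the edges of `H` minimizing `wt1`. -/
noncomputable def paramK0p {β : Type*} (H : SimpleGraph β) : ℕ :=
  sInf {k | ∃ u v, H.Adj u v ∧ wt1 H u v = paramK1 H ∧ wt0 H u v = k}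

/-!
Write `k = k0`, `K = k1'` and `ε = (K - k) / K`, so that `K * (1 - ε) = k`. If `xy` is a non-edge
of an `H`-saturated graph `G`, then `G + xy` contains a copy of `H` in which `xy` plays the role of
an edge `uv` of `H`. Comparing degrees gives `k ≤ max (d x) (d y)`, a neighbour of `x` or `y` of
degree at least `k1`, and, when `d x, d y ≤ k` (so that `wt0 uv = k0`), one of degree at least `K`.
Hence the vertices of degree `< k` form a clique, so do the vertices of degree `≤ k` without a
neighbour of degree `≥ K` (at most `k + 1` of them), and at most one vertex of degree `≥ K` has
only neighbours of degree `≤ k`.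

Discharging: every vertex of degree `≥ K` sends `ε` to each neighbour of degree `≤ k`. Since
`K * (1 - ε) = k`, every vertex then keeps at least `k + ε`, up to the deficit of the small-degree
clique (at most `(k + 1)² / 4` in total) and a loss of `ε` at each of the at most `k + 2`
exceptional vertices above. Summing, `2 |E(G)| ≥ (k + ε) n - (k + 1)² / 4 - ε (k + 2)`.
-/

open SimpleGraph Finset

section Saturation

variable {α β : Type*} {G : SimpleGraph α} {H : SimpleGraph β}

lemma deg_le_deg_of_injective_hom [Finite α] {f : β → α} (hf : Function.Injective f)
    (hom : ∀ ⦃u v : β⦄, H.Adj u v → G.Adj (f u) (f v)) (w : β) :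
    deg H w ≤ deg G (f w) := by
  rw [deg, ← Set.ncard_image_of_injective _ hf]
  exact Set.ncard_le_ncard (by rintro _ ⟨z, hz, rfl⟩; exact hom hz) (Set.toFinite _)

lemma deg_eq_degree [Fintype α] [DecidableRel G.Adj] (v : α) : deg G v = G.degree v := by
  rw [deg, Set.ncard_eq_toFinset_card', ← card_neighborSet_eq_degree, Set.toFinset_card]

lemma deg_sup_edge_le [Finite α] (x y : α) : deg (G ⊔ edge x y) x ≤ deg G x + 1 := by
  have hsub : (G ⊔ edge x y).neighborSet x ⊆ insert y (G.neighborSet x) := by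
    intro c hc
    simp only [mem_neighborSet, sup_adj, edge_adj] at hc
    simp only [Set.mem_insert_iff, mem_neighborSet]
    tauto
  exact (Set.ncard_le_ncard hsub (Set.toFinite _)).trans (Set.ncard_insert_le _ _)

lemma sup_edge_adj_iff_of_ne {x y a c : α} (hx : a ≠ x) (hy : a ≠ y) :
    (G ⊔ edge x y).Adj a c ↔ G.Adj a c := by
  simp [edge_adj, hx, hy]

lemma deg_sup_edge_of_ne {x y a : α} (hx : a ≠ x) (hy : a ≠ y) :
    deg (G ⊔ edge x y) a = deg G a := by
  simp only [deg, neighborSet, sup_edge_adj_iff_of_ne hx hy]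

lemma mem_edgeNbhd {u v w : β} (hw : w ∈ edgeNbhd H u v) :
    (H.Adj u w ∨ H.Adj v w) ∧ w ≠ u ∧ w ≠ v := by
  rcases hw with ⟨huw, hwv⟩ | ⟨hvw, hwu⟩
  · exact ⟨.inl huw, (H.ne_of_adj huw).symm, hwv⟩
  · exact ⟨.inr hvw, hwu, (H.ne_of_adj hvw).symm⟩

lemma exists_mem_edgeNbhd_deg_eq_wt1 [Finite β] {u v : β} (h : (edgeNbhd H u v).Nonempty) :
    ∃ w ∈ edgeNbhd H u v, deg H w = wt1 H u v :=
  (h.image _).csSup_mem (Set.toFinite _)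

lemma IsSat.exists_copy_sup_edge (hG : IsSat G H) {x y : α} (hxy : x ≠ y) (hna : ¬G.Adj x y) :
    ∃ (f : β → α) (u v : β), Function.Injective f ∧ H.Adj u v ∧ f u = x ∧ f v = y ∧
      ∀ ⦃a b : β⦄, H.Adj a b → (G ⊔ edge x y).Adj (f a) (f b) := by
  obtain ⟨f, hf, hom⟩ := hG.2 x y hxy hna
  have hnew : ∃ a b, H.Adj a b ∧ s(f a, f b) = s(x, y) := by
    by_contra! hcon
    refine hG.1 ⟨f, hf, fun a b hab => ?_⟩
    have := hom hab
    simp only [sup_adj, fromEdgeSet_adj, Set.mem_singleton_iff] at this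
    exact this.resolve_right fun h => hcon a b hab h.1
  obtain ⟨a, b, hab, hs⟩ := hnew
  rcases Sym2.eq_iff.1 hs with ⟨rfl, rfl⟩ | ⟨rfl, rfl⟩
  · exact ⟨f, a, b, hf, hab, rfl, rfl, hom⟩
  · exact ⟨f, b, a, hf, hab.symm, rfl, rfl, hom⟩

lemma IsSat.exists_adj_wt_le [Finite α] [Finite β] (hG : IsSat G H)
    (hiso : ∀ u v, H.Adj u v → (edgeNbhd H u v).Nonempty)
    {x y : α} (hxy : x ≠ y) (hna : ¬G.Adj x y) :
    ∃ u v, H.Adj u v ∧ wt0 H u v ≤ max (deg G x) (deg G y) ∧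
      ∃ z, (G.Adj x z ∨ G.Adj y z) ∧ wt1 H u v ≤ deg G z := by
  obtain ⟨f, u, v, hf, huv, rfl, rfl, hom⟩ := hG.exists_copy_sup_edge hxy hna
  have hdeg := deg_le_deg_of_injective_hom hf hom
  refine ⟨u, v, huv, ?_, ?_⟩
  · have hu := (hdeg u).trans (deg_sup_edge_le (f u) (f v))
    have hv := (hdeg v).trans (edge_comm (f u) (f v) ▸ deg_sup_edge_le (G := G) (f v) (f u))
    rw [wt0]
    omega
  obtain ⟨w, hw, hwt⟩ := exists_mem_edgeNbhd_deg_eq_wt1 (hiso u v huv)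
  obtain ⟨hadj, hwu, hwv⟩ := mem_edgeNbhd hw
  have hfu : f w ≠ f u := hf.ne hwu
  have hfv : f w ≠ f v := hf.ne hwv
  refine ⟨f w, ?_, hwt ▸ deg_sup_edge_of_ne hfu hfv ▸ hdeg w⟩
  rcases hadj with h | h
  · exact .inl ((sup_edge_adj_iff_of_ne hfu hfv).1 (hom h).symm).symm
  · exact .inr ((sup_edge_adj_iff_of_ne hfu hfv).1 (hom h).symm).symm

end Saturation

section SaturationParams

variable {β : Type*} {H : SimpleGraph β} {u v : β}

lemma paramK0_le_wt0 (huv : H.Adj u v) : paramK0 H ≤ wt0 H u v :=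
  Nat.sInf_le ⟨u, v, huv, rfl⟩

lemma paramK1_le_wt1 (huv : H.Adj u v) : paramK1 H ≤ wt1 H u v :=
  Nat.sInf_le ⟨u, v, huv, rfl⟩

lemma paramK1p_le_wt1 (huv : H.Adj u v) (h : wt0 H u v = paramK0 H) :
    paramK1p H ≤ wt1 H u v :=
  Nat.sInf_le ⟨u, v, huv, h, rfl⟩

variable {α : Type*} [Fintype α] [Finite β] {G : SimpleGraph α} [DecidableRel G.Adj] {x y : α}

lemma IsSat.paramK0_le_max_degree (hG : IsSat G H)
    (hiso : ∀ u v, H.Adj u v → (edgeNbhd H u v).Nonempty) (hxy : x ≠ y) (hna : ¬G.Adj x y) :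
    paramK0 H ≤ max (G.degree x) (G.degree y) := by
  obtain ⟨u, v, huv, hwt0, -⟩ := hG.exists_adj_wt_le hiso hxy hna
  simp only [deg_eq_degree] at hwt0
  exact (paramK0_le_wt0 huv).trans hwt0

lemma IsSat.exists_adj_paramK1_le_degree (hG : IsSat G H)
    (hiso : ∀ u v, H.Adj u v → (edgeNbhd H u v).Nonempty) (hxy : x ≠ y) (hna : ¬G.Adj x y) :
    ∃ z, (G.Adj x z ∨ G.Adj y z) ∧ paramK1 H ≤ G.degree z := by
  obtain ⟨u, v, huv, -, z, hz, hwt1⟩ := hG.exists_adj_wt_le hiso hxy hna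
  exact ⟨z, hz, (paramK1_le_wt1 huv).trans (deg_eq_degree (G := G) z ▸ hwt1)⟩

lemma IsSat.exists_adj_paramK1p_le_degree (hG : IsSat G H)
    (hiso : ∀ u v, H.Adj u v → (edgeNbhd H u v).Nonempty) (hxy : x ≠ y) (hna : ¬G.Adj x y)
    (hx : G.degree x ≤ paramK0 H)
    (hy : G.degree y ≤ paramK0 H) :
    ∃ z, (G.Adj x z ∨ G.Adj y z) ∧ paramK1p H ≤ G.degree z := by
  obtain ⟨u, v, huv, hwt0, z, hz, hwt1⟩ := hG.exists_adj_wt_le hiso hxy hna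
  simp only [deg_eq_degree] at hwt0 hwt1
  have hk0 := le_antisymm (hwt0.trans (max_le hx hy)) (paramK0_le_wt0 huv)
  exact ⟨z, hz, (paramK1p_le_wt1 huv hk0).trans hwt1⟩

end SaturationParams

section Discharging

variable {V : Type*} [Fintype V] {G : SimpleGraph V} [DecidableRel G.Adj]
  {k k1 K : ℕ} {ε : ℝ}

lemma SimpleGraph.IsClique.card_le_degree_add_one [DecidableEq V] {s : Finset V}
    (hs : G.IsClique (s : Set V)) {v : V} (hv : v ∈ s) : #s ≤ G.degree v + 1 := by
  have hsub : s.erase v ⊆ G.neighborFinset v := fun u hu =>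
    (mem_neighborFinset _ _ _).2 (hs hv (mem_of_mem_erase hu) (ne_of_mem_erase hu).symm)
  have := card_le_card hsub
  rw [card_erase_of_mem hv] at this
  exact Nat.le_add_of_sub_le this

lemma SimpleGraph.IsClique.sum_sub_degree_le [DecidableEq V] {s : Finset V}
    (hs : G.IsClique (s : Set V)) (k : ℕ) :
    ∑ v ∈ s, ((k : ℝ) - G.degree v) ≤ ((k : ℝ) + 1) ^ 2 / 4 := by
  have hterm : ∀ v ∈ s, (k : ℝ) - G.degree v ≤ k + 1 - #s := fun v hv => by
    have : (#s : ℝ) ≤ G.degree v + 1 := by exact_mod_cast hs.card_le_degree_add_one hv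
    linarith
  calc _ ≤ #s * ((k : ℝ) + 1 - #s) := by simpa using sum_le_card_nsmul s _ _ hterm
    _ ≤ _ := by nlinarith [sq_nonneg ((k : ℝ) + 1 - 2 * #s)]

lemma isClique_degree_lt
    (h0 : ∀ x y, x ≠ y → ¬G.Adj x y → k ≤ max (G.degree x) (G.degree y)) :
    G.IsClique (({v | G.degree v < k} : Finset V) : Set V) := by
  intro x hx y hy hxy
  simp only [coe_filter, mem_univ, true_and, Set.mem_ofPred_eq] at hx hy
  by_contra hna
  have := h0 x y hxy hna
  omega

lemma card_low_without_high_nbr_le [DecidableEq V]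
    (h1' : ∀ x y, x ≠ y → ¬G.Adj x y → G.degree x ≤ k → G.degree y ≤ k →
      ∃ z, (G.Adj x z ∨ G.Adj y z) ∧ K ≤ G.degree z) :
    #{v | G.degree v ≤ k ∧ ∀ z, G.Adj v z → G.degree z < K} ≤ k + 1 := by
  set A : Finset V := {v | G.degree v ≤ k ∧ ∀ z, G.Adj v z → G.degree z < K}
  have hA : G.IsClique (A : Set V) := by
    intro x hx y hy hxy
    simp only [A, coe_filter, mem_univ, true_and, Set.mem_ofPred_eq] at hx hy
    by_contra hna
    obtain ⟨z, hz | hz, hKz⟩ := h1' x y hxy hna hx.1 hy.1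
    · exact (hx.2 z hz).not_ge hKz
    · exact (hy.2 z hz).not_ge hKz
  obtain hempty | ⟨v, hv⟩ := A.eq_empty_or_nonempty
  · simp [hempty]
  · have := hA.card_le_degree_add_one hv
    have := (mem_filter.1 hv).2.1
    omega

lemma card_high_with_only_low_nbrs_le_one (hk : k < K) (hk1 : k < k1)
    (h1 : ∀ x y, x ≠ y → ¬G.Adj x y → ∃ z, (G.Adj x z ∨ G.Adj y z) ∧ k1 ≤ G.degree z) :
    #{v | K ≤ G.degree v ∧ ∀ z, G.Adj v z → G.degree z ≤ k} ≤ 1 := by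
  refine card_le_one.2 fun a ha b hb => ?_
  simp only [mem_filter, mem_univ, true_and] at ha hb
  by_contra hab
  have hna : ¬G.Adj a b := fun h => by have := ha.2 b h; omega
  obtain ⟨z, hz, hk1z⟩ := h1 a b hab hna
  have := hz.elim (ha.2 z) (hb.2 z)
  omega

variable (G) in
def lowNbrs (k : ℕ) (v : V) : Finset V := {z ∈ G.neighborFinset v | G.degree z ≤ k}

lemma card_low_with_high_nbr_le [DecidableEq V] :
    #{v | G.degree v ≤ k ∧ ¬∀ z, G.Adj v z → G.degree z < K} ≤
      ∑ b ∈ {b | K ≤ G.degree b}, #(lowNbrs G k b) := by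
  refine (card_le_card fun v hv => ?_).trans card_biUnion_le
  simp only [mem_filter, mem_univ, true_and, not_forall, not_lt] at hv
  obtain ⟨hv, z, hz, hKz⟩ := hv
  simp only [mem_biUnion, mem_filter, mem_univ, true_and, lowNbrs, mem_neighborFinset]
  exact ⟨z, hKz, hz.symm, hv⟩

lemma card_lowNbrs_le (v : V) : #(lowNbrs G k v) ≤ G.degree v := card_filter_le _ _

lemma card_lowNbrs_lt (v : V) (h : ¬∀ z, G.Adj v z → G.degree z ≤ k) :
    #(lowNbrs G k v) < G.degree v := by
  simp only [not_forall, not_le] at h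
  obtain ⟨z, hz, hkz⟩ := h
  exact card_lt_card (filter_ssubset.2 ⟨z, (mem_neighborFinset _ _ _).2 hz, hkz.not_ge⟩)

lemma card_low_le [DecidableEq V]
    (h1' : ∀ x y, x ≠ y → ¬G.Adj x y → G.degree x ≤ k → G.degree y ≤ k →
      ∃ z, (G.Adj x z ∨ G.Adj y z) ∧ K ≤ G.degree z) :
    #{v | G.degree v ≤ k} ≤ k + 1 + ∑ b ∈ {b | K ≤ G.degree b}, #(lowNbrs G k b) := by
  rw [← card_filter_add_card_filter_not (p := fun v => ∀ z, G.Adj v z → G.degree z < K),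
    filter_filter, filter_filter]
  exact add_le_add (card_low_without_high_nbr_le h1') card_low_with_high_nbr_le

/- Every vertex of degree `≤ k` is credited `ε`; the high vertices pay for this except at the
low vertices without a high neighbour. -/
lemma le_discharged_degree (hk : k < K) (hε0 : 0 ≤ ε) (hε1 : ε ≤ 1) (hKε : K * (1 - ε) = k)
    (v : V) :
    (k : ℝ) + ε ≤ G.degree v + (if G.degree v < k then (k - G.degree v : ℝ) else 0) +
      (if G.degree v ≤ k then ε else 0) +
      (if K ≤ G.degree v ∧ ∀ z, G.Adj v z → G.degree z ≤ k then ε else 0) -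
      (if K ≤ G.degree v then ε * #(lowNbrs G k v) else 0) := by
  rcases le_or_gt (G.degree v) k with hlow | hlow
  · have hnK : ¬K ≤ G.degree v := by omega
    simp only [hlow, hnK, false_and, if_true, if_false]
    split_ifs with hlt
    · linarith
    · have : (k : ℝ) ≤ G.degree v := by exact_mod_cast not_lt.1 hlt
      linarith
  have hnlt : ¬G.degree v < k := by omega
  have hnle : ¬G.degree v ≤ k := by omega
  simp only [hnlt, hnle, if_false]
  rcases lt_or_ge (G.degree v) K with hmid | hhigh
  · have hnK : ¬K ≤ G.degree v := by omega
    simp only [hnK, false_and, if_false]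
    have : (k : ℝ) + 1 ≤ G.degree v := by exact_mod_cast hlow
    linarith
  have hKd : (K : ℝ) ≤ G.degree v := by exact_mod_cast hhigh
  rw [if_pos hhigh]
  by_cases honly : ∀ z, G.Adj v z → G.degree z ≤ k
  · rw [if_pos ⟨hhigh, honly⟩]
    have hl : (#(lowNbrs G k v) : ℝ) ≤ G.degree v := by exact_mod_cast card_lowNbrs_le v
    nlinarith [mul_nonneg hε0 (sub_nonneg.2 hl), mul_nonneg (sub_nonneg.2 hKd) (sub_nonneg.2 hε1)]
  · rw [if_neg (fun h => honly h.2)]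
    have hl : (#(lowNbrs G k v) : ℝ) + 1 ≤ G.degree v := by
      exact_mod_cast card_lowNbrs_lt v honly
    nlinarith [mul_nonneg hε0 (sub_nonneg.2 hl), mul_nonneg (sub_nonneg.2 hKd) (sub_nonneg.2 hε1)]

theorem le_sum_degrees_of_nonadj [DecidableEq V] (hk : k < K) (hk1 : k < k1) (hε0 : 0 ≤ ε)
    (hε1 : ε ≤ 1) (hKε : K * (1 - ε) = k)
    (h0 : ∀ x y, x ≠ y → ¬G.Adj x y → k ≤ max (G.degree x) (G.degree y))
    (h1 : ∀ x y, x ≠ y → ¬G.Adj x y → ∃ z, (G.Adj x z ∨ G.Adj y z) ∧ k1 ≤ G.degree z)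
    (h1' : ∀ x y, x ≠ y → ¬G.Adj x y → G.degree x ≤ k → G.degree y ≤ k →
      ∃ z, (G.Adj x z ∨ G.Adj y z) ∧ K ≤ G.degree z) :
    ((k : ℝ) + ε) * Fintype.card V - (((k : ℝ) + 1) ^ 2 / 4 + ε * (k + 2)) ≤
      ∑ v, (G.degree v : ℝ) := by
  have hsum :=
    sum_le_sum fun v (_ : v ∈ univ) => le_discharged_degree (G := G) hk hε0 hε1 hKε v
  simp only [sum_const, card_univ, nsmul_eq_mul, sum_add_distrib, sum_sub_distrib] at hsum
  set L := ∑ b ∈ {b | K ≤ G.degree b}, #(lowNbrs G k b)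
  have hdefect : ∑ v, (if G.degree v < k then (k - G.degree v : ℝ) else 0) ≤
      ((k : ℝ) + 1) ^ 2 / 4 := by
    rw [← sum_filter]
    exact (isClique_degree_lt h0).sum_sub_degree_le k
  have hlow : ∑ v, (if G.degree v ≤ k then ε else 0) ≤ ε * (k + 1 + L) := by
    rw [← sum_filter, sum_const, nsmul_eq_mul, mul_comm]
    exact mul_le_mul_of_nonneg_left (by exact_mod_cast card_low_le h1') hε0
  have honly :
      ∑ v, (if K ≤ G.degree v ∧ ∀ z, G.Adj v z → G.degree z ≤ k then ε else 0) ≤ ε := by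
    rw [← sum_filter, sum_const, nsmul_eq_mul]
    exact mul_le_of_le_one_left hε0
      (by exact_mod_cast card_high_with_only_low_nbrs_le_one hk hk1 h1)
  have hsent : ∑ v, (if K ≤ G.degree v then ε * #(lowNbrs G k v) else 0) = ε * L := by
    rw [← sum_filter, ← mul_sum]
    push_cast [L]
    rfl
  linarith

end Discharging

theorem stmt7_general {β : Type*} [Fintype β] (H : SimpleGraph β)
    (hiso : ∀ u v, H.Adj u v → (edgeNbhd H u v).Nonempty)
    (hk : paramK0 H < paramK1p H) (hk1 : paramK0 H < paramK1 H)
    (n : ℕ)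
    (G : SimpleGraph (Fin n)) (hG : IsSat G H) :
    ((paramK0 H : ℝ) +
        ((paramK1p H : ℝ) - (paramK0 H : ℝ)) / (paramK1p H : ℝ)) * n / 2 -
      (((paramK0 H : ℝ) + 2) * ((paramK1p H : ℝ) - (paramK0 H : ℝ)) /
          (2 * (paramK1p H : ℝ)) +
        ((paramK0 H : ℝ) + 1) ^ 2 / 8) ≤
      (G.edgeSet.ncard : ℝ) := by
  classical
  set k0 := paramK0 H
  set K := paramK1p H
  have hkK : (k0 : ℝ) < K := by exact_mod_cast hk
  have hK : (0 : ℝ) < K := (Nat.cast_nonneg k0).trans_lt hkK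
  set ε : ℝ := (K - k0) / K with hε
  have hKε : K * (1 - ε) = k0 := by
    rw [hε]
    field_simp
    ring
  have hbound := le_sum_degrees_of_nonadj (G := G) hk hk1 (div_nonneg (by linarith) hK.le)
    ((div_le_one hK).2 (by linarith [Nat.cast_nonneg (α := ℝ) k0])) hKε
    (fun _ _ hxy hna => hG.paramK0_le_max_degree hiso hxy hna)
    (fun _ _ hxy hna => hG.exists_adj_paramK1_le_degree hiso hxy hna)
    (fun _ _ hxy hna => hG.exists_adj_paramK1p_le_degree hiso hxy hna)
  rw [Fintype.card_fin, ← Nat.cast_sum, sum_degrees_eq_twice_card_edges] at hbound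
  rw [← coe_edgeFinset, Set.ncard_coe_finset]
  have hc2 : ((k0 : ℝ) + 2) * (K - k0) / (2 * K) = (k0 + 2) * ε / 2 := by
    rw [hε]
    ring
  push_cast at hbound
  linarith

/-- Lemma (general, part 1, second bound): if `k1' > k0` and `k1 > k0` then
`sat(n, H) ≥ (k0 + (k1' - k0)/k1') * n/2 - c2`. -/
theorem stmt7 {β : Type*} [Fintype β] (H : SimpleGraph β)
    (hedge : ∃ u v, H.Adj u v)
    (hiso : ∀ u v, H.Adj u v → (edgeNbhd H u v).Nonempty)
    (hk : paramK0 H < paramK1p H) (hk1 : paramK0 H < paramK1 H)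
    (n : ℕ) (hn : Fintype.card β ≤ n)
    (G : SimpleGraph (Fin n)) (hG : IsSat G H) :
    ((paramK0 H : ℝ) +
        ((paramK1p H : ℝ) - (paramK0 H : ℝ)) / (paramK1p H : ℝ)) * n / 2 -
      (((paramK0 H : ℝ) + 2) * ((paramK1p H : ℝ) - (paramK0 H : ℝ)) /
          (2 * (paramK1p H : ℝ)) +
        ((paramK0 H : ℝ) + 1) ^ 2 / 8) ≤
      (G.edgeSet.ncard : ℝ) :=
  stmt7_general H hiso hk hk1 n G hG
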